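/- arXiv:1610.01438 — 5 statements merged into one kernel-verified Lean document; each statement's English description precedes it below -/
import Mathlib

section
/- Let C ⊆ ℤ be a symmetric set (n ∈ C implies −n ∈ C) containing 0 that is not syndetic. Then there exists a strictly increasing sequence of positive integers (h_i) with h_{i+1} ≥ 2 h_i such that, defining D_m = {c_1 h_1 + c_2 h_2 + ⋯ + c_m h_m : c_i ∈ {−1,0,1}}, one has C ∩ D_m = {0} for all m ∈ ℕ. -/
/-- `C ⊆ ℤ` is syndetic if there is `N > 0` such that every interval of length `N` meets `C`. -/
def IsSyndetic (C : Set ℤ) : Prop :=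
  ∃ N : ℤ, 0 < N ∧ ∀ a : ℤ, ∃ c ∈ C, c ∈ Set.Ico a (a + N)

/-- `D h m = {c 1 * h 1 + ⋯ + c m * h m : c i ∈ {-1,0,1}}`, the iterated sumset
`{-h 1,0,h 1} ⊕ ⋯ ⊕ {-h m,0,h m}` (indices `1,…,m`). -/
def D (h : ℕ → ℤ) (m : ℕ) : Set ℤ :=
  {x : ℤ | ∃ c : ℕ → ℤ, (∀ i, c i ∈ ({-1, 0, 1} : Set ℤ)) ∧
    x = ∑ i ∈ Finset.Icc 1 m, c i * h i}


/-! Since `C` is symmetric, contains `0` and has arbitrarily long gaps, it has arbitrarily long gaps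
arbitrarily far to the right. Choose `h (m + 1)` beyond `2 * h m` and centred in a gap of radius
`2 * h m`. Every element of `D h m` has absolute value at most `h 1 + ⋯ + h m ≤ 2 * h m`, so an
element `y ± h (m + 1)` of `D h (m + 1)` with `y ∈ D h m` lies in that gap or in its mirror image,
and only the elements `y` of `D h m` survive in `C`; by induction only `0` does. -/

open Finset

theorem exists_disjoint_Ico_of_not_isSyndetic {C : Set ℤ} (hns : ¬ IsSyndetic C) {N : ℤ}
    (hN : 0 < N) : ∃ a, Disjoint C (Set.Ico a (a + N)) := by
  unfold IsSyndetic at hns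
  push Not at hns
  obtain ⟨a, ha⟩ := hns N hN
  exact ⟨a, Set.disjoint_left.mpr ha⟩

theorem exists_pos_disjoint_Ico_of_not_isSyndetic {C : Set ℤ} (hsym : ∀ n ∈ C, -n ∈ C)
    (h0 : (0 : ℤ) ∈ C) (hns : ¬ IsSyndetic C) {N : ℤ} (hN : 0 < N) :
    ∃ a, 0 < a ∧ Disjoint C (Set.Ico a (a + N)) := by
  obtain ⟨a, ha⟩ := exists_disjoint_Ico_of_not_isSyndetic hns hN
  by_cases hapos : 0 < a
  · exact ⟨a, hapos, ha⟩
  have hgap_neg : a + N ≤ 0 := by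
    by_contra! h
    exact Set.disjoint_left.mp ha h0 ⟨by omega, h⟩
  -- the gap reflected through `0`
  refine ⟨1 - a - N, by omega, Set.disjoint_left.mpr fun c hc hmem => ?_⟩
  exact Set.disjoint_left.mp ha (hsym c hc) ⟨by grind, by grind⟩

theorem exists_gt_disjoint_Icc_of_not_isSyndetic {C : Set ℤ} (hsym : ∀ n ∈ C, -n ∈ C)
    (h0 : (0 : ℤ) ∈ C) (hns : ¬ IsSyndetic C) (r : ℤ) :
    ∃ ℓ, r < ℓ ∧ Disjoint C (Set.Icc (ℓ - r) (ℓ + r)) := by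
  obtain ⟨a, hapos, ha⟩ :=
    exists_pos_disjoint_Ico_of_not_isSyndetic hsym h0 hns (N := 2 * max r 0 + 1) (by omega)
  refine ⟨a + max r 0, by omega, ha.mono_right fun x hx => ?_⟩
  simp only [Set.mem_Icc, Set.mem_Ico] at hx ⊢
  omega

section D

variable {h : ℕ → ℤ} {m : ℕ} {x : ℤ}

theorem zero_mem_D : (0 : ℤ) ∈ D h m :=
  ⟨0, fun _ => by simp, by simp⟩

theorem eq_zero_of_mem_D_zero (hx : x ∈ D h 0) : x = 0 := by
  obtain ⟨c, -, rfl⟩ := hx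
  simp

theorem abs_le_of_mem_D (hx : x ∈ D h m) : |x| ≤ ∑ i ∈ Icc 1 m, |h i| := by
  obtain ⟨c, hc, rfl⟩ := hx
  refine (abs_sum_le_sum_abs _ _).trans (sum_le_sum fun i _ => ?_)
  have hci : |c i| ≤ 1 := by
    obtain hci | hci | hci := hc i <;> rw [hci] <;> norm_num
  rw [abs_mul]
  exact mul_le_of_le_one_left (abs_nonneg _) hci

theorem exists_of_mem_D_succ (hx : x ∈ D h (m + 1)) :
    ∃ y ∈ D h m, ∃ e ∈ ({-1, 0, 1} : Set ℤ), x = y + e * h (m + 1) := by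
  obtain ⟨c, hc, rfl⟩ := hx
  exact ⟨_, ⟨c, hc, rfl⟩, c (m + 1), hc _, sum_Icc_succ_top (by omega) _⟩

theorem inter_D_eq_singleton_zero {C : Set ℤ} (hsym : ∀ n ∈ C, -n ∈ C) (h0 : (0 : ℤ) ∈ C)
    {ρ : ℕ → ℤ} (hρ : ∀ m, ∀ x ∈ D h m, |x| ≤ ρ m)
    (hgap : ∀ m, Disjoint C (Set.Icc (h (m + 1) - ρ m) (h (m + 1) + ρ m))) (m : ℕ) :
    C ∩ D h m = {0} := by
  refine Set.eq_singleton_iff_unique_mem.mpr ⟨⟨h0, zero_mem_D⟩, ?_⟩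
  induction m with
  | zero => exact fun x hx => eq_zero_of_mem_D_zero hx.2
  | succ m ih =>
    rintro x ⟨hxC, hxD⟩
    obtain ⟨y, hyD, e, he, rfl⟩ := exists_of_mem_D_succ hxD
    have hy := abs_le.mp (hρ m y hyD)
    have hnot_gap := Set.disjoint_left.mp (hgap m)
    rcases he with rfl | rfl | rfl
    · exact absurd (hsym _ hxC) (hnot_gap · ⟨by linarith, by linarith⟩)
    · simpa using ih y ⟨by simpa using hxC, hyD⟩
    · exact absurd hxC (hnot_gap · ⟨by linarith, by linarith⟩)

end D

theorem sum_Icc_le_two_mul_of_doubling {h : ℕ → ℤ} (h0 : 0 ≤ h 0)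
    (hdouble : ∀ i, 2 * h i ≤ h (i + 1)) (m : ℕ) : ∑ i ∈ Icc 1 m, h i ≤ 2 * h m := by
  induction m with
  | zero => simpa using h0
  | succ m ih =>
    rw [sum_Icc_succ_top (by omega)]
    linarith [hdouble m]

def iterateHeights (F : ℤ → ℤ) : ℕ → ℤ
  | 0 => 1
  | m + 1 => F (2 * iterateHeights F m)

theorem iterateHeights_pos {F : ℤ → ℤ} (hF : ∀ r, r < F r) (m : ℕ) : 0 < iterateHeights F m := by
  induction m with
  | zero => exact one_pos
  | succ m ih => exact (by omega : 0 < 2 * iterateHeights F m).trans (hF _)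

theorem exists_skyscraper_heights_avoiding
    (C : Set ℤ) (hsym : ∀ n ∈ C, -n ∈ C) (h0 : (0 : ℤ) ∈ C) (hns : ¬ IsSyndetic C) :
    ∃ h : ℕ → ℤ, (∀ i, 0 < h i) ∧ StrictMono h ∧ (∀ i, 2 * h i ≤ h (i + 1)) ∧
      ∀ m : ℕ, C ∩ D h m = {0} := by
  choose F hF_gt hF_gap using exists_gt_disjoint_Icc_of_not_isSyndetic hsym h0 hns
  set h := iterateHeights F
  have hpos : ∀ i, 0 < h i := iterateHeights_pos hF_gt
  have hdouble : ∀ i, 2 * h i < h (i + 1) := fun i => hF_gt _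
  have hD_bound : ∀ m, ∀ x ∈ D h m, |x| ≤ 2 * h m := fun m x hx =>
    calc |x| ≤ ∑ i ∈ Icc 1 m, |h i| := abs_le_of_mem_D hx
      _ = ∑ i ∈ Icc 1 m, h i := sum_congr rfl fun i _ => abs_of_pos (hpos i)
      _ ≤ 2 * h m := sum_Icc_le_two_mul_of_doubling (hpos 0).le (fun i => (hdouble i).le) m
  refine ⟨h, hpos, strictMono_nat_of_lt_succ fun i => ?_, fun i => (hdouble i).le,
    inter_D_eq_singleton_zero hsym h0 hD_bound fun m => hF_gap _⟩
  linarith [hdouble i, hpos i]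
end

section
/- Let T be an invertible measure-preserving ergodic transformation of a σ-finite infinite measure space (X, μ), let A* be a measurable set with 0 < μ(A*) < ∞, and fix 0 < ε < μ(A*). Then there exists a measurable A ⊆ A* with μ(A) > μ(A*) − ε such that the conservative sequence C_T(A) = {n ∈ ℤ : μ(Tⁿ A ∩ A) > 0} is not syndetic. -/
/-!
By von Neumann's mean ergodic theorem, and because an ergodic map of an infinite measure space
has no nonzero invariant vector in `L²`, the Cesàro averages of `μ (A* ∩ T⁻ⁿ A*)` tend to `0`.
Hence for every `k` there is a window of `k` consecutive times `n` along which the sets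
`A* ∩ T⁻ⁿ A*` have total measure below `δₖ`, where `∑ δₖ < ε`. Removing all these sets from `A*`
leaves a set `A` with `μ (A* \ A) < ε` and `A ∩ T⁻ⁿ A = ∅` for every `n` in every window, so the
conservative sequence of `A` has arbitrarily long gaps.
-/

open MeasureTheory

open Filter Function Set
open scoped ENNReal NNReal Topology

theorem exists_sum_Ico_lt_of_tendsto_cesaro_zero {a : ℕ → ℝ}
    (ha : Tendsto (fun N : ℕ ↦ (N : ℝ)⁻¹ * ∑ n ∈ Finset.range N, a n) atTop (𝓝 0))
    {L : ℕ} (hL : 0 < L) {δ : ℝ} (hδ : 0 < δ) :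
    ∃ ℓ, ∑ j ∈ Finset.Ico ℓ (ℓ + L), a j < δ := by
  by_contra! hwindow
  have hblocks (t : ℕ) : t * δ ≤ ∑ j ∈ Finset.range (t * L), a j := by
    induction t with
    | zero => simp
    | succ t ih =>
      rw [Finset.range_eq_Ico, ← Finset.sum_Ico_consecutive _ (Nat.zero_le (t * L))
        (Nat.mul_le_mul_right L (Nat.le_add_right t 1)), ← Finset.range_eq_Ico, add_mul, one_mul,
        Nat.cast_succ, add_one_mul]
      linarith [hwindow (t * L)]
  have hsub := ha.comp (tendsto_id.atTop_mul_const' hL)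
  have hlower : ∀ᶠ t : ℕ in atTop,
      δ / L ≤ ((t * L : ℕ) : ℝ)⁻¹ * ∑ n ∈ Finset.range (t * L), a n := by
    filter_upwards [eventually_gt_atTop 0] with t ht
    have ht' : (0 : ℝ) < t := Nat.cast_pos.2 ht
    calc δ / L = ((t * L : ℕ) : ℝ)⁻¹ * (t * δ) := by push_cast; field_simp
      _ ≤ _ := by gcongr; exact hblocks t
  exact (div_pos hδ (Nat.cast_pos.2 hL)).not_ge (ge_of_tendsto hsub hlower)

theorem not_isSyndetic_of_forall_exists_Ico_notMem {C : Set ℤ}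
    (h : ∀ L : ℕ, ∃ ℓ : ℕ, ∀ j ∈ Finset.Ico ℓ (ℓ + L), (j : ℤ) ∉ C) : ¬ IsSyndetic C := by
  rintro ⟨N, hN, hC⟩
  obtain ⟨ℓ, hℓ⟩ := h N.toNat
  obtain ⟨c, hcC, hc⟩ := hC ℓ
  lift c to ℕ using (Int.natCast_nonneg ℓ).trans hc.1
  rw [mem_Ico] at hc
  exact hℓ c (Finset.mem_Ico.2 ⟨by omega, by omega⟩) hcC

section Ergodic

variable {X : Type*} [MeasurableSpace X] {μ : Measure X} {T : X → X}

theorem Ergodic.Lp_eq_zero_of_compMeasurePreserving_eq {E : Type*} [NormedAddCommGroup E]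
    {p : ℝ≥0∞} (herg : Ergodic T μ) (hinf : μ univ = ∞) (hp0 : p ≠ 0) (hp : p ≠ ∞)
    {f : Lp E p μ} (hf : Lp.compMeasurePreserving T herg.toMeasurePreserving f = f) : f = 0 := by
  have hinv : f ∘ T =ᵐ[μ] f :=
    (hf ▸ Lp.coeFn_compMeasurePreserving f herg.toMeasurePreserving).symm
  obtain ⟨c, hc⟩ := herg.ae_eq_const_of_ae_eq_comp_ae (Lp.aestronglyMeasurable f) hinv
  rcases (memLp_const_iff hp0 hp).1 ((Lp.memLp f).ae_eq hc) with rfl | hlt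
  · exact Lp.eq_zero_iff_ae_eq_zero.2 hc
  · exact absurd hinf hlt.ne

theorem Ergodic.tendsto_cesaro_measureReal_inter_preimage_iterate (herg : Ergodic T μ)
    (hinf : μ univ = ∞) {A : Set X} (hA : MeasurableSet A) (hAfin : μ A ≠ ∞) :
    Tendsto (fun N : ℕ ↦ (N : ℝ)⁻¹ * ∑ n ∈ Finset.range N, μ.real (A ∩ T^[n] ⁻¹' A))
      atTop (𝓝 0) := by
  have hT := herg.toMeasurePreserving
  let U : Lp ℝ 2 μ →L[ℝ] Lp ℝ 2 μ := (Lp.compMeasurePreservingₗᵢ ℝ T hT).toContinuousLinearMap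
  let f : Lp ℝ 2 μ := indicatorConstLp 2 hA hAfin 1
  have hmean := U.tendsto_birkhoffAverage_orthogonalProjection
    (LinearIsometry.norm_toContinuousLinearMap_le _) f
  have hproj :
      ((U.eqLocus (1 : Lp ℝ 2 μ →L[ℝ] Lp ℝ 2 μ)).orthogonalProjectionOnto f : Lp ℝ 2 μ) = 0 :=
    herg.Lp_eq_zero_of_compMeasurePreserving_eq hinf two_ne_zero ENNReal.ofNat_ne_top
      ((U.eqLocus (1 : Lp ℝ 2 μ →L[ℝ] Lp ℝ 2 μ)).orthogonalProjectionOnto f).2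
  have hiter (n : ℕ) : U^[n] f = indicatorConstLp 2 (hA.preimage (hT.iterate n).measurable)
      (by rwa [(hT.iterate n).measure_preimage hA.nullMeasurableSet]) 1 := by
    change (Lp.compMeasurePreserving T hT)^[n] f = _
    rw [Lp.compMeasurePreserving_iterate]
    rfl
  rw [hproj] at hmean
  have hinner := (tendsto_const_nhds (x := f)).inner (𝕜 := ℝ) hmean
  rw [inner_zero_right] at hinner
  refine hinner.congr fun N ↦ ?_
  simp [birkhoffAverage, birkhoffSum, real_inner_smul_right, inner_sum, hiter, f,
    L2.real_inner_indicatorConstLp_one_indicatorConstLp_one]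

theorem Ergodic.exists_measure_biUnion_Ico_inter_preimage_iterate_lt (herg : Ergodic T μ)
    (hinf : μ univ = ∞) {A : Set X} (hA : MeasurableSet A) (hAfin : μ A ≠ ∞)
    {L : ℕ} (hL : 0 < L) {δ : ℝ≥0} (hδ : 0 < δ) :
    ∃ ℓ, μ (⋃ j ∈ Finset.Ico ℓ (ℓ + L), A ∩ T^[j] ⁻¹' A) < δ := by
  obtain ⟨ℓ, hℓ⟩ := exists_sum_Ico_lt_of_tendsto_cesaro_zero
    (herg.tendsto_cesaro_measureReal_inter_preimage_iterate hinf hA hAfin) hL hδ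
  refine ⟨ℓ, (measure_biUnion_finset_le _ _).trans_lt ?_⟩
  have hfin (j : ℕ) : μ (A ∩ T^[j] ⁻¹' A) ≠ ∞ := measure_ne_top_of_subset inter_subset_left hAfin
  calc ∑ j ∈ Finset.Ico ℓ (ℓ + L), μ (A ∩ T^[j] ⁻¹' A)
      = ENNReal.ofReal (∑ j ∈ Finset.Ico ℓ (ℓ + L), μ.real (A ∩ T^[j] ⁻¹' A)) := by
        rw [ENNReal.ofReal_sum_of_nonneg fun _ _ ↦ measureReal_nonneg]
        simp only [ofReal_measureReal (hfin _)]
    _ < ENNReal.ofReal δ := (ENNReal.ofReal_lt_ofReal_iff (by positivity)).2 hℓ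
    _ = δ := ENNReal.ofReal_coe_nnreal

theorem Ergodic.exists_subset_measure_diff_lt_and_long_return_gaps
    (herg : Ergodic T μ) (hinf : μ univ = ∞) {A : Set X} (hA : MeasurableSet A)
    (hAfin : μ A ≠ ∞) {η : ℝ≥0∞} (hη : η ≠ 0) :
    ∃ B ⊆ A, MeasurableSet B ∧ μ (A \ B) < η ∧
      ∀ L : ℕ, ∃ ℓ : ℕ, ∀ j ∈ Finset.Ico ℓ (ℓ + L), B ∩ T^[j] ⁻¹' B = ∅ := by
  obtain ⟨δ, hδpos, hδsum⟩ := ENNReal.exists_pos_sum_of_countable hη ℕ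
  choose ℓ hℓ using fun L : ℕ ↦ herg.exists_measure_biUnion_Ico_inter_preimage_iterate_lt
    hinf hA hAfin L.succ_pos (hδpos L)
  set bad : ℕ → Set X := fun L ↦ ⋃ j ∈ Finset.Ico (ℓ L) (ℓ L + (L + 1)), A ∩ T^[j] ⁻¹' A
  have hbad : MeasurableSet (⋃ L, bad L) := .iUnion fun L ↦ Finset.measurableSet_biUnion _
    fun j _ ↦ hA.inter (hA.preimage (herg.iterate j).measurable)
  refine ⟨A \ ⋃ L, bad L, sdiff_subset, hA.diff hbad, ?_, fun L ↦ ⟨ℓ L, fun j hj ↦ ?_⟩⟩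
  · calc μ (A \ (A \ ⋃ L, bad L)) ≤ μ (⋃ L, bad L) := by
          rw [sdiff_sdiff_right_self]; exact measure_mono inter_subset_right
      _ ≤ ∑' L, μ (bad L) := measure_iUnion_le _
      _ ≤ ∑' L, (δ L : ℝ≥0∞) := ENNReal.tsum_le_tsum fun L ↦ (hℓ L).le
      _ < η := hδsum
  · refine eq_empty_of_forall_notMem ?_
    rintro x ⟨⟨hxA, hxbad⟩, hjA, -⟩
    refine hxbad ?_
    have hj' : j ∈ Finset.Ico (ℓ L) (ℓ L + (L + 1)) := by
      simp only [Finset.mem_Ico] at hj ⊢; omega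
    exact mem_iUnion.2 ⟨L, mem_biUnion hj' ⟨hxA, hjA⟩⟩

end Ergodic

theorem exists_subset_with_non_syndetic_conservative_sequence_general
    {X : Type*} [MeasurableSpace X] (μ : Measure X)
    (hinf : μ Set.univ = ⊤) (e : Equiv.Perm X)
    (herg : Ergodic e μ)
    (Astar : Set X) (hAstar : MeasurableSet Astar)
    (hfin : μ Astar < ⊤)
    (ε : ℝ) (hε0 : 0 < ε) :
    ∃ A : Set X, A ⊆ Astar ∧ MeasurableSet A ∧
      (μ Astar).toReal - ε < (μ A).toReal ∧
      ¬ IsSyndetic {n : ℤ | 0 < μ (⇑(e ^ n) '' A ∩ A)} := by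
  obtain ⟨A, hAsub, hA, hdiff, hgaps⟩ :=
    herg.exists_subset_measure_diff_lt_and_long_return_gaps
      hinf hAstar hfin.ne (ENNReal.ofReal_pos.2 hε0).ne'
  refine ⟨A, hAsub, hA, ?_, not_isSyndetic_of_forall_exists_Ico_notMem fun L ↦ ?_⟩
  · have hdiff_real : μ.real (Astar \ A) < ε := ENNReal.toReal_lt_of_lt_ofReal hdiff
    rw [measureReal_sdiff hAsub hA hfin.ne] at hdiff_real
    change μ.real Astar - ε < μ.real A
    linarith
  · obtain ⟨ℓ, hℓ⟩ := hgaps L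
    refine ⟨ℓ, fun j hj ↦ ?_⟩
    rw [mem_ofPred_eq, zpow_natCast, ← Equiv.Perm.iterate_eq_pow, ← image_inter_preimage,
      hℓ j hj, image_empty, measure_empty]
    exact lt_irrefl 0

theorem exists_subset_with_non_syndetic_conservative_sequence
    {X : Type*} [MeasurableSpace X] (μ : Measure X) [SigmaFinite μ]
    (hinf : μ Set.univ = ⊤) (e : Equiv.Perm X)
    (hT : MeasurePreserving e μ μ) (hT' : MeasurePreserving e.symm μ μ)
    (herg : Ergodic e μ)
    (Astar : Set X) (hAstar : MeasurableSet Astar)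
    (hpos : 0 < μ Astar) (hfin : μ Astar < ⊤)
    (ε : ℝ) (hε0 : 0 < ε) (hε1 : ε < (μ Astar).toReal) :
    ∃ A : Set X, A ⊆ Astar ∧ MeasurableSet A ∧
      (μ Astar).toReal - ε < (μ A).toReal ∧
      ¬ IsSyndetic {n : ℤ | 0 < μ (⇑(e ^ n) '' A ∩ A)} :=
  exists_subset_with_non_syndetic_conservative_sequence_general μ hinf e herg Astar hAstar hfin ε
    hε0
end

section
/- Let T be an invertible measure-preserving ergodic transformation of a σ-finite infinite measure space. Then there exists a measurable set A of positive measure such that for every n ∈ ℕ there exists ℓ > 0 with μ(T^{kℓ + j} A ∩ A) = 0 for all k = 1, …, n and all j with |j| ≤ n. -/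
/-!
For `W` of finite measure, the von Neumann mean ergodic theorem applied to the Koopman operator
on `L²` shows that the Cesàro means of `μ (T⁻ᵐ W ∩ W)` tend to `0`: since `μ` is infinite and `T`
ergodic, the only invariant `L²` function is `0`. Averaging along the progressions `m ↦ k m + c`
then gives `ℓ` for which the returns of `W` to itself at the finitely many times `k ℓ + j`
(`1 ≤ k ≤ n`, `|j| ≤ n`) have total measure `< ε`. Deleting the returning points costs `< ε` and
leaves a subset with the `n`-th gap property. Doing this for `n = 1, 2, …` inside a set `W₀` of
finite positive measure, with losses summing to less than `μ W₀`, leaves a set of positive measure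
with every gap property.
-/

open MeasureTheory Filter Finset Topology
open scoped ENNReal RealInnerProductSpace

noncomputable def cesaroMean (φ : ℕ → ℝ) (N : ℕ) : ℝ := (N : ℝ)⁻¹ * ∑ m ∈ range N, φ m

section Cesaro

variable {φ : ℕ → ℝ}

lemma exists_lt_of_tendsto_cesaroMean {l ε : ℝ} (h : Tendsto (cesaroMean φ) atTop (𝓝 l))
    (hl : l < ε) : ∃ m, φ m < ε := by
  by_contra! hφ
  have hmean : ∀ᶠ N in atTop, ε ≤ cesaroMean φ N := by
    filter_upwards [eventually_ge_atTop 1] with N hN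
    have hN' : (0 : ℝ) < N := by exact_mod_cast hN
    rw [cesaroMean, le_inv_mul_iff₀ hN']
    simpa using card_nsmul_le_sum (range N) φ ε fun m _ => hφ m
  exact hl.not_ge (ge_of_tendsto h hmean)

lemma cesaroMean_sum {ι : Type*} (s : Finset ι) (φ : ι → ℕ → ℝ) (N : ℕ) :
    cesaroMean (fun m => ∑ i ∈ s, φ i m) N = ∑ i ∈ s, cesaroMean (φ i) N := by
  simp only [cesaroMean, sum_comm (s := range N), mul_sum]

lemma tendsto_cesaroMean_comp_affine (hφ : ∀ m, 0 ≤ φ m)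
    (h : Tendsto (cesaroMean φ) atTop (𝓝 0)) {a : ℕ} (ha : 1 ≤ a) (b : ℕ) :
    Tendsto (cesaroMean fun m => φ (a * m + b)) atTop (𝓝 0) := by
  have hlim : Tendsto (fun N => ((a + b : ℕ) : ℝ) * cesaroMean φ (a * N + b)) atTop (𝓝 0) := by
    have hlin : Tendsto (fun N => a * N + b) atTop atTop :=
      tendsto_atTop_mono (fun N => show N ≤ a * N + b by nlinarith) tendsto_id
    simpa using (h.comp hlin).const_mul ((a + b : ℕ) : ℝ)
  refine tendsto_of_tendsto_of_tendsto_of_le_of_le' tendsto_const_nhds hlim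
    (Eventually.of_forall fun N => mul_nonneg (by positivity) (sum_nonneg fun m _ => hφ _)) ?_
  filter_upwards [eventually_ge_atTop 1] with N hN
  have hsum : ∑ m ∈ range N, φ (a * m + b) ≤ ∑ i ∈ range (a * N + b), φ i := by
    rw [← sum_image (g := fun m => a * m + b) fun x _ y _ hxy => by
      simpa using Nat.eq_of_mul_eq_mul_left (by omega) (Nat.add_right_cancel hxy)]
    refine sum_le_sum_of_subset_of_nonneg ?_ fun i _ _ => hφ i
    intro i hi
    simp only [mem_image, mem_range] at hi ⊢
    obtain ⟨m, hm, rfl⟩ := hi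
    nlinarith
  have hN' : (0 : ℝ) < N := by exact_mod_cast hN
  have hratio : ((a * N + b : ℕ) : ℝ) ≤ ((a + b : ℕ) : ℝ) * N := by
    exact_mod_cast (by nlinarith : a * N + b ≤ (a + b) * N)
  simp only [cesaroMean]
  calc (N : ℝ)⁻¹ * ∑ m ∈ range N, φ (a * m + b)
      ≤ (N : ℝ)⁻¹ * ∑ i ∈ range (a * N + b), φ i := by gcongr
    _ = ((a * N + b : ℕ) : ℝ) / N * (((a * N + b : ℕ) : ℝ)⁻¹ * ∑ i ∈ range (a * N + b), φ i) := by
        field_simp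
    _ ≤ ((a + b : ℕ) : ℝ) * (((a * N + b : ℕ) : ℝ)⁻¹ * ∑ i ∈ range (a * N + b), φ i) := by
        gcongr
        · exact mul_nonneg (by positivity) (sum_nonneg fun i _ => hφ i)
        · exact (div_le_iff₀ hN').2 hratio

lemma exists_sum_comp_affine_lt {ι : Type*} (hφ : ∀ m, 0 ≤ φ m)
    (h : Tendsto (cesaroMean φ) atTop (𝓝 0)) {s : Finset ι} {a : ι → ℕ} (ha : ∀ i ∈ s, 1 ≤ a i)
    (b : ι → ℕ) {ε : ℝ} (hε : 0 < ε) : ∃ m, ∑ i ∈ s, φ (a i * m + b i) < ε := by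
  refine exists_lt_of_tendsto_cesaroMean ?_ hε
  simp_rw [funext (cesaroMean_sum s fun i m => φ (a i * m + b i))]
  simpa using tendsto_finsetSum s fun i hi => tendsto_cesaroMean_comp_affine hφ h (ha i hi) (b i)

end Cesaro

section MeanErgodic

variable {X : Type*} [MeasurableSpace X] {μ : Measure X} {f : X → X}

lemma Ergodic.eq_zero_of_compMeasurePreserving_eq {E : Type*} [NormedAddCommGroup E]
    {p : ℝ≥0∞} (hp₀ : p ≠ 0) (hp : p ≠ ∞) (hf : Ergodic f μ) (hμ : μ Set.univ = ∞)
    {g : Lp E p μ} (hg : Lp.compMeasurePreserving f hf.toMeasurePreserving g = g) : g = 0 := by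
  have hinv : (g : X → E) ∘ f =ᵐ[μ] g :=
    (Lp.coeFn_compMeasurePreserving g _).symm.trans (by rw [hg])
  obtain ⟨c, hc⟩ := hf.ae_eq_const_of_ae_eq_comp_ae (Lp.aestronglyMeasurable g) hinv
  have hc₀ : c = 0 := by
    simpa [hμ] using (memLp_const_iff hp₀ hp).1 ((memLp_congr_ae hc).1 (Lp.memLp g))
  exact Lp.eq_zero_iff_ae_eq_zero.2 (hc.trans (by simp [hc₀]))

theorem Ergodic.tendsto_cesaroMean_measureReal_preimage_inter (hf : Ergodic f μ)
    (hμ : μ Set.univ = ∞) {W : Set X} (hW : MeasurableSet W) (hWfin : μ W ≠ ∞) :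
    Tendsto (cesaroMean fun m => μ.real (f^[m] ⁻¹' W ∩ W)) atTop (𝓝 0) := by
  have : Fact ((1 : ℝ≥0∞) ≤ 2) := fact_one_le_two_ennreal
  set U := (Lp.compMeasurePreservingₗᵢ ℝ f hf.toMeasurePreserving :
    Lp ℝ 2 μ →ₗᵢ[ℝ] Lp ℝ 2 μ).toContinuousLinearMap
  set F := indicatorConstLp 2 hW hWfin (1 : ℝ)
  set V := U.eqLocus (1 : Lp ℝ 2 μ →L[ℝ] Lp ℝ 2 μ)
  have hproj : (V.orthogonalProjectionOnto F : Lp ℝ 2 μ) = 0 :=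
    hf.eq_zero_of_compMeasurePreserving_eq two_ne_zero ENNReal.ofNat_ne_top hμ
      (V.orthogonalProjectionOnto F).2
  have hlim := (U.tendsto_birkhoffAverage_orthogonalProjection
    (LinearIsometry.norm_toContinuousLinearMap_le _) F).inner (𝕜 := ℝ) (tendsto_const_nhds (x := F))
  rw [hproj, inner_zero_left] at hlim
  refine hlim.congr fun N => ?_
  rw [birkhoffAverage, birkhoffSum, real_inner_smul_left, sum_inner, cesaroMean]
  congr 1
  refine sum_congr rfl fun m _ => ?_
  change ⟪(Lp.compMeasurePreserving f hf.toMeasurePreserving)^[m] F, F⟫ = _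
  rw [Lp.compMeasurePreserving_iterate, Lp.indicatorConstLp_compMeasurePreserving]
  exact L2.real_inner_indicatorConstLp_one_indicatorConstLp_one _ _ _ _

end MeanErgodic

section NonReturning

variable {X ι : Type*} {f : X → X} {s : Finset ι} {t : ι → ℕ} {W : Set X}

def nonReturningPoints (f : X → X) (s : Finset ι) (t : ι → ℕ) (W : Set X) : Set X :=
  W \ ⋃ i ∈ s, f^[t i] ⁻¹' W

lemma nonReturningPoints_subset : nonReturningPoints f s t W ⊆ W := Set.sdiff_subset

lemma disjoint_image_iterate_nonReturningPoints {i : ι} (hi : i ∈ s) :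
    Disjoint (f^[t i] '' nonReturningPoints f s t W) (nonReturningPoints f s t W) := by
  rw [Set.disjoint_image_left]
  exact Set.disjoint_right.2 fun x hfx hx =>
    hx.2 (Set.mem_biUnion hi (show f^[t i] x ∈ W from nonReturningPoints_subset hfx))

variable [MeasurableSpace X] {μ : Measure X}

lemma measurableSet_nonReturningPoints (hf : Measurable f) (hW : MeasurableSet W) :
    MeasurableSet (nonReturningPoints f s t W) :=
  hW.diff (s.measurableSet_biUnion fun i _ => hW.preimage (hf.iterate (t i)))

lemma measure_diff_nonReturningPoints_le :
    μ (W \ nonReturningPoints f s t W) ≤ ∑ i ∈ s, μ (f^[t i] ⁻¹' W ∩ W) := by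
  rw [nonReturningPoints, Set.sdiff_sdiff_right_self, Set.inter_iUnion₂]
  simp only [Set.inter_comm W]
  exact measure_biUnion_finset_le _ _

theorem Ergodic.exists_measure_diff_nonReturningPoints_le (hf : Ergodic f μ)
    (hμ : μ Set.univ = ∞) (hW : MeasurableSet W) (hWfin : μ W ≠ ∞) {a : ι → ℕ}
    (ha : ∀ i ∈ s, 1 ≤ a i) (b : ι → ℕ) {ε : ℝ} (hε : 0 < ε) :
    ∃ m, μ (W \ nonReturningPoints f s (fun i => a i * m + b i) W) ≤ ENNReal.ofReal ε := by
  obtain ⟨m, hm⟩ := exists_sum_comp_affine_lt (fun _ => measureReal_nonneg)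
    (hf.tendsto_cesaroMean_measureReal_preimage_inter hμ hW hWfin) ha b hε
  refine ⟨m, measure_diff_nonReturningPoints_le.trans ?_⟩
  calc ∑ i ∈ s, μ (f^[a i * m + b i] ⁻¹' W ∩ W)
      = ENNReal.ofReal (∑ i ∈ s, μ.real (f^[a i * m + b i] ⁻¹' W ∩ W)) := by
        rw [ENNReal.ofReal_sum_of_nonneg fun _ _ => measureReal_nonneg]
        exact sum_congr rfl fun i _ =>
          (ofReal_measureReal (measure_ne_top_of_subset Set.inter_subset_right hWfin)).symm
    _ ≤ ENNReal.ofReal ε := ENNReal.ofReal_le_ofReal hm.le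

end NonReturning

section Refinement

variable {X : Type*} [MeasurableSpace X] {μ : Measure X}

theorem exists_subset_forall_of_forall_exists_subset {P : ℕ → Set X → Prop}
    (hP : ∀ n ⦃s t : Set X⦄, s ⊆ t → P n t → P n s) {W₀ : Set X} (hW₀ : MeasurableSet W₀)
    (hrefine : ∀ n (W : Set X), MeasurableSet W → W ⊆ W₀ → ∀ ε : ℝ, 0 < ε →
      ∃ W' ⊆ W, MeasurableSet W' ∧ μ (W \ W') ≤ ENNReal.ofReal ε ∧ P n W')
    {δ : ℝ≥0∞} (hδ : δ ≠ 0) :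
    ∃ A ⊆ W₀, MeasurableSet A ∧ μ (W₀ \ A) < δ ∧ ∀ n, P n A := by
  obtain ⟨ε, hε, hεδ⟩ := ENNReal.exists_pos_sum_of_countable hδ ℕ
  choose! R hRsub hRmeas hRμ hRP using hrefine
  let W : ℕ → Set X := fun n => Nat.rec W₀ (fun n Wn => R n Wn (ε n)) n
  have hW : ∀ n, MeasurableSet (W n) ∧ W n ⊆ W₀ := by
    intro n
    induction n with
    | zero => exact ⟨hW₀, subset_rfl⟩
    | succ n ih =>
      exact ⟨hRmeas n _ ih.1 ih.2 _ (hε n), (hRsub n _ ih.1 ih.2 _ (hε n)).trans ih.2⟩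
  refine ⟨⋂ n, W n, Set.iInter_subset W 0, .iInter fun n => (hW n).1, ?_, fun n =>
    hP n (Set.iInter_subset W (n + 1)) (hRP n _ (hW n).1 (hW n).2 _ (hε n))⟩
  have hcover : W₀ \ ⋂ n, W n ⊆ ⋃ n, W n \ W (n + 1) := by
    rintro x ⟨hx₀, hx⟩
    by_contra! hstay
    refine hx (Set.mem_iInter.2 fun n => ?_)
    induction n with
    | zero => exact hx₀
    | succ n ih => exact not_not.1 fun hn => hstay (Set.mem_iUnion.2 ⟨n, ih, hn⟩)
  calc μ (W₀ \ ⋂ n, W n) ≤ ∑' n, μ (W n \ W (n + 1)) :=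
        (measure_mono hcover).trans (measure_iUnion_le _)
    _ ≤ ∑' n, (ε n : ℝ≥0∞) := ENNReal.tsum_le_tsum fun n => by
        simpa using hRμ n _ (hW n).1 (hW n).2 _ (hε n)
    _ < δ := hεδ

end Refinement

section MultipleGaps

variable {X : Type*} {e : Equiv.Perm X}

def HasMultipleGaps (e : Equiv.Perm X) (n : ℕ) (A : Set X) : Prop :=
  ∃ ℓ : ℤ, 0 < ℓ ∧ ∀ k : ℤ, 1 ≤ k → k ≤ n → ∀ j : ℤ, |j| ≤ n →
    Disjoint (⇑(e ^ (k * ℓ + j)) '' A) A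

lemma HasMultipleGaps.mono {n : ℕ} {s t : Set X} (hst : s ⊆ t) (ht : HasMultipleGaps e n t) :
    HasMultipleGaps e n s := by
  obtain ⟨ℓ, hℓ, hgap⟩ := ht
  exact ⟨ℓ, hℓ, fun k hk₁ hk₂ j hj =>
    (hgap k hk₁ hk₂ j hj).mono (Set.image_mono hst) hst⟩

variable [MeasurableSpace X] {μ : Measure X}

theorem Ergodic.exists_subset_hasMultipleGaps (he : Ergodic e μ) (hμ : μ Set.univ = ∞)
    {W : Set X} (hW : MeasurableSet W) (hWfin : μ W ≠ ∞) (n : ℕ) {ε : ℝ} (hε : 0 < ε) :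
    ∃ W' ⊆ W, MeasurableSet W' ∧ μ (W \ W') ≤ ENNReal.ofReal ε ∧ HasMultipleGaps e n W' := by
  -- with `ℓ = m + n + 1`, the time `k ℓ + j` is `a (k, j) * m + b (k, j)`
  let s := Icc (1 : ℤ) n ×ˢ Icc (-n : ℤ) n
  let a : ℤ × ℤ → ℕ := fun p => p.1.toNat
  let b : ℤ × ℤ → ℕ := fun p => (p.1 * (n + 1) + p.2).toNat
  have ha : ∀ p ∈ s, 1 ≤ a p := fun p hp => by
    simp only [s, mem_product, mem_Icc] at hp
    exact show 1 ≤ p.1.toNat by omega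
  obtain ⟨m, hm⟩ := he.exists_measure_diff_nonReturningPoints_le hμ hW hWfin ha b hε
  refine ⟨_, nonReturningPoints_subset, measurableSet_nonReturningPoints he.measurable hW, hm,
    m + n + 1, by omega, fun k hk₁ hk₂ j hj => ?_⟩
  obtain ⟨hj₁, hj₂⟩ := abs_le.1 hj
  have hkj : (k, j) ∈ s := by simp only [s, mem_product, mem_Icc]; constructor <;> omega
  have htime : k * (m + n + 1 : ℤ) + j = ((a (k, j) * m + b (k, j) : ℕ) : ℤ) := by
    have : 0 ≤ k * (n + 1) + j := by nlinarith
    simp only [a, b]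
    push_cast
    rw [Int.toNat_of_nonneg (by omega), Int.toNat_of_nonneg this]
    ring
  rw [htime, zpow_natCast, Equiv.Perm.coe_pow]
  exact disjoint_image_iterate_nonReturningPoints hkj

end MultipleGaps

theorem exists_set_with_multiple_gaps_general
    {X : Type*} [MeasurableSpace X] (μ : Measure X) [SigmaFinite μ]
    (hinf : μ Set.univ = ⊤) (e : Equiv.Perm X)
    (herg : Ergodic e μ) :
    ∃ A : Set X, MeasurableSet A ∧ 0 < μ A ∧
      ∀ n : ℕ, ∃ ℓ : ℤ, 0 < ℓ ∧
        ∀ k : ℤ, 1 ≤ k → k ≤ n → ∀ j : ℤ, |j| ≤ n →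
          μ (⇑(e ^ (k * ℓ + j)) '' A ∩ A) = 0 := by
  obtain ⟨W₀, hW₀, -, hW₀pos, hW₀fin⟩ :=
    Measure.exists_subset_measure_lt_top MeasurableSet.univ (hinf ▸ ENNReal.zero_lt_top)
  obtain ⟨A, -, hA, hW₀A, hgaps⟩ := exists_subset_forall_of_forall_exists_subset (μ := μ)
    (P := HasMultipleGaps e) (fun n _ _ => HasMultipleGaps.mono) hW₀
    (fun n _ hW hWW₀ _ hε => herg.exists_subset_hasMultipleGaps hinf hW
      (measure_ne_top_of_subset hWW₀ hW₀fin.ne) n hε) hW₀pos.ne'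
  refine ⟨A, hA, pos_iff_ne_zero.2 fun hA₀ => ?_, fun n => ?_⟩
  · exact (measure_sdiff_null hA₀ ▸ hW₀A).false
  · obtain ⟨ℓ, hℓ, hgap⟩ := hgaps n
    exact ⟨ℓ, hℓ, fun k hk₁ hk₂ j hj => by
      rw [Set.disjoint_iff_inter_eq_empty.1 (hgap k hk₁ hk₂ j hj), measure_empty]⟩

theorem exists_set_with_multiple_gaps
    {X : Type*} [MeasurableSpace X] (μ : Measure X) [SigmaFinite μ]
    (hinf : μ Set.univ = ⊤) (e : Equiv.Perm X)
    (hT : MeasurePreserving e μ μ) (hT' : MeasurePreserving e.symm μ μ)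
    (herg : Ergodic e μ) :
    ∃ A : Set X, MeasurableSet A ∧ 0 < μ A ∧
      ∀ n : ℕ, ∃ ℓ : ℤ, 0 < ℓ ∧
        ∀ k : ℤ, 1 ≤ k → k ≤ n → ∀ j : ℤ, |j| ≤ n →
          μ (⇑(e ^ (k * ℓ + j)) '' A ∩ A) = 0 :=
  exists_set_with_multiple_gaps_general μ hinf e herg
end

section
/- Let T : X → X and S : Y → Y be measure-preserving transformations of σ-finite measure spaces, and suppose both T and S are partially rigid with constants α, β > 0 along a common increasing sequence (n_i) of positive integers. Then T × S is partially rigid with constant αβ along (n_i); in particular T × S is conservative. -/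
/-!
On a rectangle `A ×ˢ B` the return measure factors as `μ (T^k A ∩ A) * ν (S^k B ∩ B)`, and the
liminf of a product dominates the product of the liminfs, so rectangles return with constant
`α * β`. Returns of disjoint sets add up, so the same holds for finite disjoint unions of
rectangles; these form an algebra generating the product σ-algebra, hence approximate every set
`E` of finite measure. Since `R^k` preserves the measure, replacing `E` by `F` changes
`μ (R^k E ∩ E)` by at most `2 μ (E ∆ F)`, so the bound passes to the limit. Conservativity
follows because a positive liminf forces some return of positive measure.
-/

open MeasureTheory Filter Set
open scoped ENNReal symmDiff

section Generators

variable {α : Type*} {C : Set (Set α)}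

theorem MeasureTheory.IsSetSemiring.isSetAlgebra_supClosure (hC : IsSetSemiring C)
    (huniv : univ ∈ C) : IsSetAlgebra (supClosure C) where
  empty_mem := hC.isSetRing_supClosure.empty_mem
  compl_mem _ hs := by
    simpa only [compl_eq_univ_sdiff] using
      hC.isSetRing_supClosure.sdiff_mem (subset_supClosure huniv) hs
  union_mem _ _ hs ht := hC.isSetRing_supClosure.union_mem hs ht

theorem MeasurableSpace.generateFrom_supClosure :
    MeasurableSpace.generateFrom (supClosure C) = MeasurableSpace.generateFrom C :=
  le_antisymm
    (MeasurableSpace.generateFrom_le fun _ ↦ measurableSet_generateFrom_of_mem_supClosure)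
    (MeasurableSpace.generateFrom_mono subset_supClosure)

end Generators

section Rectangles

variable {X Y : Type*} [MeasurableSpace X] [MeasurableSpace Y]

theorem MeasureTheory.isSetSemiring_measurableRectangles :
    IsSetSemiring
      (image2 (· ×ˢ ·) {s : Set X | MeasurableSet s} {t : Set Y | MeasurableSet t}) where
  empty_mem := ⟨∅, .empty, ∅, .empty, prod_empty⟩
  inter_mem := by
    rintro _ ⟨A, hA, B, hB, rfl⟩ _ ⟨A', hA', B', hB', rfl⟩
    exact ⟨A ∩ A', hA.inter hA', B ∩ B', hB.inter hB', prod_inter_prod.symm⟩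
  sdiff_eq_sUnion' := by
    classical
    rintro _ ⟨A, hA, B, hB, rfl⟩ _ ⟨A', hA', B', hB', rfl⟩
    refine ⟨{(A \ A') ×ˢ B, (A ∩ A') ×ˢ (B \ B')}, ?_, ?_, ?_⟩
    · simp only [Finset.coe_insert, Finset.coe_singleton, insert_subset_iff,
        singleton_subset_iff]
      exact ⟨mem_image2_of_mem (hA.diff hA') hB,
        mem_image2_of_mem (hA.inter hA') (hB.diff hB')⟩
    · simp only [Finset.coe_insert, Finset.coe_singleton]
      refine (pairwiseDisjoint_singleton _ _).insert fun _ hj _ ↦ ?_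
      rw [mem_singleton_iff.mp hj]
      exact disjoint_prod.mpr (Or.inl (disjoint_sdiff_left.mono_right inter_subset_right))
    · ext ⟨x, y⟩
      simp only [Finset.coe_insert, Finset.coe_singleton, sUnion_insert, sUnion_singleton,
        Set.mem_sdiff, mem_prod, mem_union, mem_inter_iff]
      tauto

theorem MeasureTheory.Measure.measureDense_supClosure_measurableRectangles (μ : Measure X)
    (ν : Measure Y) [SigmaFinite μ] [SigmaFinite ν] :
    (μ.prod ν).MeasureDense (supClosure
      (image2 (· ×ˢ ·) {s : Set X | MeasurableSet s} {t : Set Y | MeasurableSet t})) :=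
  .of_generateFrom_isSetAlgebra_sigmaFinite
    (isSetSemiring_measurableRectangles.isSetAlgebra_supClosure
      ⟨univ, .univ, univ, .univ, univ_prod_univ⟩)
    ((μ.toFiniteSpanningSetsIn.prod ν.toFiniteSpanningSetsIn).mono subset_supClosure)
    (by rw [MeasurableSpace.generateFrom_supClosure, generateFrom_prod])

end Rectangles

theorem ENNReal.le_liminf_add (u v : ℕ → ℝ≥0∞) :
    liminf u atTop + liminf v atTop ≤ liminf (fun k ↦ u k + v k) atTop := by
  have hmono (w : ℕ → ℝ≥0∞) : Monotone fun k ↦ ⨅ i ≥ k, w i :=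
    fun _ _ hk ↦ biInf_mono fun _ hi ↦ hk.trans hi
  simp only [liminf_eq_iSup_iInf_of_nat]
  rw [ENNReal.iSup_add_iSup_of_monotone (hmono u) (hmono v)]
  exact iSup_mono fun k ↦ le_iInf₂ fun i hi ↦ add_le_add (iInf₂_le i hi) (iInf₂_le i hi)

theorem ENNReal.sum_liminf_le_liminf_sum {ι : Type*} (I : Finset ι)
    (u : ι → ℕ → ℝ≥0∞) :
    ∑ i ∈ I, liminf (u i) atTop ≤ liminf (fun k ↦ ∑ i ∈ I, u i k) atTop := by
  classical
  induction I using Finset.induction_on with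
  | empty => simp
  | insert a I ha ih =>
    simp only [Finset.sum_insert ha]
    exact (add_le_add_right ih _).trans (ENNReal.le_liminf_add _ _)

theorem Equiv.Perm.image_pow_eq_preimage_iterate {Z : Type*} (R : Equiv.Perm Z) (k : ℕ)
    (s : Set Z) : ⇑(R ^ k) '' s = (⇑R.symm)^[k] ⁻¹' s := by
  rw [Equiv.image_eq_preimage_symm, ← Equiv.Perm.inv_def, ← inv_pow, Equiv.Perm.coe_pow,
    Equiv.Perm.inv_def]

theorem Equiv.Perm.coe_prodCongr_pow {X Y : Type*} (T : Equiv.Perm X) (S : Equiv.Perm Y)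
    (k : ℕ) : ⇑((T.prodCongr S) ^ k) = Prod.map ⇑(T ^ k) ⇑(S ^ k) := by
  rw [Equiv.Perm.coe_pow, Equiv.Perm.coe_pow, Equiv.Perm.coe_pow, ← Prod.map_iterate]
  rfl

section Dynamics

variable {Z : Type*} [MeasurableSpace Z]

def PartiallyRigidSet (μ : Measure Z) (R : Equiv.Perm Z) (n : ℕ → ℕ) (α : ℝ≥0∞)
    (s : Set Z) : Prop :=
  α * μ s ≤ liminf (fun i ↦ μ (⇑(R ^ n i) '' s ∩ s)) atTop

def IsPartiallyRigid (μ : Measure Z) (R : Equiv.Perm Z) (n : ℕ → ℕ) (α : ℝ≥0∞) : Prop :=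
  ∀ s, MeasurableSet s → 0 < μ s → μ s < ⊤ → PartiallyRigidSet μ R n α s

variable {μ : Measure Z} {R : Equiv.Perm Z} {n : ℕ → ℕ} {α : ℝ≥0∞} {s t : Set Z}

theorem PartiallyRigidSet.of_measure_eq_zero (hs : μ s = 0) :
    PartiallyRigidSet μ R n α s := by
  simp [PartiallyRigidSet, hs]

theorem IsPartiallyRigid.partiallyRigidSet (h : IsPartiallyRigid μ R n α)
    (hs : MeasurableSet s) (hμs : μ s ≠ ⊤) : PartiallyRigidSet μ R n α s := by
  rcases eq_zero_or_pos (μ s) with h0 | hpos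
  · exact .of_measure_eq_zero h0
  · exact h s hs hpos hμs.lt_top

theorem PartiallyRigidSet.biUnion_finset {ι : Type*} {I : Finset ι} {s : ι → Set Z}
    (hR : Measurable R.symm) (hs : ∀ i ∈ I, MeasurableSet (s i))
    (hd : (I : Set ι).PairwiseDisjoint s) (h : ∀ i ∈ I, PartiallyRigidSet μ R n α (s i)) :
    PartiallyRigidSet μ R n α (⋃ i ∈ I, s i) := by
  have hreturn (k : ℕ) : ∑ i ∈ I, μ (⇑(R ^ k) '' s i ∩ s i) ≤
      μ (⇑(R ^ k) '' (⋃ i ∈ I, s i) ∩ ⋃ i ∈ I, s i) := by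
    rw [← measure_biUnion_finset (hd.mono fun _ ↦ inter_subset_right) fun i hi ↦ ?_]
    · refine measure_mono (iUnion₂_subset fun i hi ↦ ?_)
      exact inter_subset_inter (image_mono (subset_biUnion_of_mem hi)) (subset_biUnion_of_mem hi)
    · rw [Equiv.Perm.image_pow_eq_preimage_iterate]
      exact ((hR.iterate k) (hs i hi)).inter (hs i hi)
  calc α * μ (⋃ i ∈ I, s i) ≤ ∑ i ∈ I, α * μ (s i) := by
        rw [← Finset.mul_sum]; gcongr; exact measure_biUnion_finset_le I s
    _ ≤ ∑ i ∈ I, liminf (fun k ↦ μ (⇑(R ^ n k) '' s i ∩ s i)) atTop := Finset.sum_le_sum h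
    _ ≤ _ := (ENNReal.sum_liminf_le_liminf_sum I _).trans
        (liminf_le_liminf (Eventually.of_forall fun k ↦ hreturn (n k)))

theorem measure_image_pow_inter_le (hR : MeasurePreserving R.symm μ μ) (k : ℕ)
    (hs : MeasurableSet s) (ht : MeasurableSet t) :
    μ (⇑(R ^ k) '' t ∩ t) ≤ μ (⇑(R ^ k) '' s ∩ s) + 2 * μ (s ∆ t) := by
  have hsub :
      ⇑(R ^ k) '' t ∩ t ⊆ (⇑(R ^ k) '' s ∩ s) ∪ (⇑(R ^ k) '' (t \ s) ∪ (t \ s)) := by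
    rintro _ ⟨⟨z, hzt, rfl⟩, hRzt⟩
    by_cases hzs : z ∈ s
    · by_cases hRzs : (R ^ k) z ∈ s
      · exact Or.inl ⟨mem_image_of_mem _ hzs, hRzs⟩
      · exact Or.inr (Or.inr ⟨hRzt, hRzs⟩)
    · exact Or.inr (Or.inl (mem_image_of_mem _ ⟨hzt, hzs⟩))
  have himage : μ (⇑(R ^ k) '' (t \ s)) = μ (t \ s) := by
    rw [Equiv.Perm.image_pow_eq_preimage_iterate]
    exact (hR.iterate k).measure_preimage (ht.diff hs).nullMeasurableSet
  have hdiff : μ (t \ s) ≤ μ (s ∆ t) := measure_mono subset_union_right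
  calc μ (⇑(R ^ k) '' t ∩ t)
      ≤ μ (⇑(R ^ k) '' s ∩ s) + (μ (⇑(R ^ k) '' (t \ s)) + μ (t \ s)) :=
        (measure_mono hsub).trans <|
          (measure_union_le _ _).trans (by gcongr; exact measure_union_le _ _)
    _ ≤ μ (⇑(R ^ k) '' s ∩ s) + 2 * μ (s ∆ t) := by rw [himage, two_mul]; gcongr

theorem PartiallyRigidSet.of_measureDense {𝒜 : Set (Set Z)} (h𝒜 : μ.MeasureDense 𝒜)
    (hR : MeasurePreserving R.symm μ μ) (hα : α ≠ ⊤)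
    (h : ∀ t ∈ 𝒜, μ t ≠ ⊤ → PartiallyRigidSet μ R n α t) (hs : MeasurableSet s)
    (hμs : μ s ≠ ⊤) : PartiallyRigidSet μ R n α s := by
  set L := liminf (fun i ↦ μ (⇑(R ^ n i) '' s ∩ s)) atTop
  suffices hbound : ∀ t ∈ 𝒜, μ t ≠ ⊤ → α * μ s ≤ L + μ (s ∆ t) * (2 + α) by
    refine ENNReal.le_of_forall_pos_le_add fun ε hε _ ↦ ?_
    obtain ⟨δ, hδ, hδε⟩ := ENNReal.exists_nnreal_pos_mul_lt (b := ε)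
      (ENNReal.add_ne_top.mpr ⟨ENNReal.ofNat_ne_top (n := 2), hα⟩) (by exact_mod_cast hε.ne')
    obtain ⟨t, ht, hμt, hst⟩ := h𝒜.fin_meas_approx hs hμs δ (by exact_mod_cast hδ)
    rw [ENNReal.ofReal_coe_nnreal] at hst
    exact (hbound t ht hμt).trans (by gcongr; exact (mul_le_mul_left hst.le _).trans hδε.le)
  intro t ht hμt
  have hLt : liminf (fun i ↦ μ (⇑(R ^ n i) '' t ∩ t)) atTop ≤ L + μ (s ∆ t) * 2 := by
    rw [← liminf_add_const atTop _ _ (by isBoundedDefault) (by isBoundedDefault)]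
    refine liminf_le_liminf (Eventually.of_forall fun i ↦ ?_)
    rw [mul_comm]
    exact measure_image_pow_inter_le hR (n i) hs (h𝒜.measurable t ht)
  calc α * μ s ≤ α * (μ t + μ (s ∆ t)) := by
        gcongr; exact (measure_mono (le_symmDiff_sup_left t s)).trans (by
          rw [symmDiff_comm, add_comm]; exact measure_union_le _ _)
    _ = α * μ t + μ (s ∆ t) * α := by ring
    _ ≤ (L + μ (s ∆ t) * 2) + μ (s ∆ t) * α := by gcongr; exact (h t ht hμt).trans hLt
    _ = L + μ (s ∆ t) * (2 + α) := by ring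

theorem IsPartiallyRigid.le_one [SigmaFinite μ] (h : IsPartiallyRigid μ R n α) (hμ : μ ≠ 0) :
    α ≤ 1 := by
  obtain ⟨A, hA, -, hA0, hAfin⟩ := Measure.exists_subset_measure_lt_top MeasurableSet.univ
    (Measure.measure_univ_pos.mpr hμ)
  have hreturn : liminf (fun i ↦ μ (⇑(R ^ n i) '' A ∩ A)) atTop ≤ μ A :=
    liminf_le_of_frequently_le' (Frequently.of_forall fun _ ↦ measure_mono inter_subset_right)
  rw [← ENNReal.mul_le_mul_iff_left hA0.ne' hAfin.ne, one_mul]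
  exact (h A hA hA0 hAfin).trans hreturn

theorem IsPartiallyRigid.exists_measure_image_pow_inter_pos [SigmaFinite μ]
    (h : IsPartiallyRigid μ R n α) (hα : α ≠ 0) (hn : ∀ i, 0 < n i) (hs : MeasurableSet s)
    (hμs : 0 < μ s) : ∃ m, 0 < m ∧ 0 < μ (⇑(R ^ m) '' s ∩ s) := by
  obtain ⟨t, ht, hts, ht0, htfin⟩ := Measure.exists_subset_measure_lt_top hs hμs
  have hlim : 0 < liminf (fun i ↦ μ (⇑(R ^ n i) '' t ∩ t)) atTop :=
    (ENNReal.mul_pos hα ht0.ne').trans_le (h t ht ht0 htfin)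
  obtain ⟨i, hi⟩ := (eventually_lt_of_lt_liminf hlim).exists
  exact ⟨n i, hn i, hi.trans_le (measure_mono (inter_subset_inter (image_mono hts) hts))⟩

end Dynamics

section Product

variable {X Y : Type*} [MeasurableSpace X] [MeasurableSpace Y] {μ : Measure X} {ν : Measure Y}
  {T : Equiv.Perm X} {S : Equiv.Perm Y} {n : ℕ → ℕ} {α β : ℝ≥0∞}

theorem PartiallyRigidSet.prod [SFinite ν] {A : Set X} {B : Set Y}
    (hA : PartiallyRigidSet μ T n α A) (hB : PartiallyRigidSet ν S n β B) :
    PartiallyRigidSet (μ.prod ν) (T.prodCongr S) n (α * β) (A ×ˢ B) := by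
  unfold PartiallyRigidSet at *
  simp_rw [Equiv.Perm.coe_prodCongr_pow, prodMap_image_prod, prod_inter_prod, Measure.prod_prod]
  calc α * β * (μ A * ν B) = (α * μ A) * (β * ν B) := by ring
    _ ≤ _ := mul_le_mul' hA hB
    _ ≤ _ := ENNReal.le_liminf_mul

theorem IsPartiallyRigid.partiallyRigidSet_prod [SFinite ν] (hT : IsPartiallyRigid μ T n α)
    (hS : IsPartiallyRigid ν S n β) {A : Set X} {B : Set Y} (hA : MeasurableSet A)
    (hB : MeasurableSet B) (hfin : μ.prod ν (A ×ˢ B) ≠ ⊤) :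
    PartiallyRigidSet (μ.prod ν) (T.prodCongr S) n (α * β) (A ×ˢ B) := by
  rw [Measure.prod_prod] at hfin
  by_cases h0 : μ A * ν B = 0
  · exact .of_measure_eq_zero (by rwa [Measure.prod_prod])
  obtain ⟨hA0, hB0⟩ := mul_ne_zero_iff.mp h0
  exact (hT.partiallyRigidSet hA (ENNReal.lt_top_of_mul_ne_top_left hfin hB0).ne).prod
    (hS.partiallyRigidSet hB (ENNReal.lt_top_of_mul_ne_top_right hfin hA0).ne)

theorem IsPartiallyRigid.partiallyRigidSet_of_mem_supClosure [SFinite ν]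
    (hT : IsPartiallyRigid μ T n α) (hS : IsPartiallyRigid ν S n β)
    (hT' : Measurable T.symm) (hS' : Measurable S.symm) {E : Set (X × Y)}
    (hE : E ∈ supClosure (image2 (· ×ˢ ·) {s : Set X | MeasurableSet s}
      {t : Set Y | MeasurableSet t}))
    (hfin : μ.prod ν E ≠ ⊤) : PartiallyRigidSet (μ.prod ν) (T.prodCongr S) n (α * β) E := by
  obtain ⟨Q, hQ⟩ := isSetSemiring_measurableRectangles.mem_supClosure_iff.mp hE
  have hE_eq : E = ⋃ p ∈ Q.parts, p := by
    simpa only [Finset.sup_id_set_eq_sUnion, sUnion_eq_biUnion, Finset.mem_coe] using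
      Q.sup_parts.symm
  have hrect : ∀ p ∈ Q.parts,
      MeasurableSet p ∧ PartiallyRigidSet (μ.prod ν) (T.prodCongr S) n (α * β) p := by
    intro p hp
    obtain ⟨A, hA, B, hB, rfl⟩ := hQ hp
    refine ⟨hA.prod hB, hT.partiallyRigidSet_prod hS hA hB ?_⟩
    exact ne_top_of_le_ne_top hfin (measure_mono (Q.le hp))
  rw [hE_eq]
  exact .biUnion_finset (hT'.prodMap hS') (fun p hp ↦ (hrect p hp).1) Q.disjoint
    (fun p hp ↦ (hrect p hp).2)

theorem IsPartiallyRigid.prod [SigmaFinite μ] [SigmaFinite ν] (hT : IsPartiallyRigid μ T n α)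
    (hS : IsPartiallyRigid ν S n β) (hT' : MeasurePreserving T.symm μ μ)
    (hS' : MeasurePreserving S.symm ν ν) :
    IsPartiallyRigid (μ.prod ν) (T.prodCongr S) n (α * β) := by
  intro E hE hE0 hEfin
  have hμ : μ ≠ 0 := by rintro rfl; simp at hE0
  have hν : ν ≠ 0 := by rintro rfl; simp at hE0
  have hαβ : α * β ≠ ⊤ :=
    ENNReal.mul_ne_top (ne_top_of_le_ne_top ENNReal.one_ne_top (hT.le_one hμ))
      (ne_top_of_le_ne_top ENNReal.one_ne_top (hS.le_one hν))
  exact .of_measureDense (Measure.measureDense_supClosure_measurableRectangles μ ν)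
    (hT'.prod hS') hαβ (fun t ht htfin ↦ hT.partiallyRigidSet_of_mem_supClosure hS
      hT'.measurable hS'.measurable ht htfin) hE hEfin.ne

end Product

theorem product_partially_rigid_and_conservative_general
    {X Y : Type*} [MeasurableSpace X] [MeasurableSpace Y]
    (μ : Measure X) (ν : Measure Y) [SigmaFinite μ] [SigmaFinite ν]
    (T : Equiv.Perm X) (S : Equiv.Perm Y)
    (hT' : MeasurePreserving T.symm μ μ)
    (hS' : MeasurePreserving S.symm ν ν)
    (α β : ENNReal) (hα : 0 < α) (hβ : 0 < β)
    (n : ℕ → ℕ) (hnpos : ∀ i, 0 < n i)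
    (hTrig : ∀ A : Set X, MeasurableSet A → 0 < μ A → μ A < ⊤ →
      α * μ A ≤ liminf (fun i => μ (⇑(T ^ n i) '' A ∩ A)) atTop)
    (hSrig : ∀ B : Set Y, MeasurableSet B → 0 < ν B → ν B < ⊤ →
      β * ν B ≤ liminf (fun i => ν (⇑(S ^ n i) '' B ∩ B)) atTop) :
    (∀ E : Set (X × Y), MeasurableSet E → 0 < (μ.prod ν) E → (μ.prod ν) E < ⊤ →
      α * β * (μ.prod ν) E ≤
        liminf (fun i => (μ.prod ν) (⇑((T.prodCongr S) ^ n i) '' E ∩ E)) atTop) ∧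
    (∀ B : Set (X × Y), MeasurableSet B → 0 < (μ.prod ν) B →
      ∃ m : ℕ, 0 < m ∧ 0 < (μ.prod ν) (⇑((T.prodCongr S) ^ m) '' B ∩ B)) := by
  have hrigid : IsPartiallyRigid (μ.prod ν) (T.prodCongr S) n (α * β) :=
    IsPartiallyRigid.prod hTrig hSrig hT' hS'
  exact ⟨hrigid, fun B hB hB0 ↦
    hrigid.exists_measure_image_pow_inter_pos (mul_ne_zero hα.ne' hβ.ne') hnpos hB hB0⟩

theorem product_partially_rigid_and_conservative
    {X Y : Type*} [MeasurableSpace X] [MeasurableSpace Y]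
    (μ : Measure X) (ν : Measure Y) [SigmaFinite μ] [SigmaFinite ν]
    (T : Equiv.Perm X) (S : Equiv.Perm Y)
    (hT : MeasurePreserving T μ μ) (hT' : MeasurePreserving T.symm μ μ)
    (hS : MeasurePreserving S ν ν) (hS' : MeasurePreserving S.symm ν ν)
    (α β : ENNReal) (hα : 0 < α) (hβ : 0 < β)
    (n : ℕ → ℕ) (hn : StrictMono n) (hnpos : ∀ i, 0 < n i)
    (hTrig : ∀ A : Set X, MeasurableSet A → 0 < μ A → μ A < ⊤ →
      α * μ A ≤ liminf (fun i => μ (⇑(T ^ n i) '' A ∩ A)) atTop)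
    (hSrig : ∀ B : Set Y, MeasurableSet B → 0 < ν B → ν B < ⊤ →
      β * ν B ≤ liminf (fun i => ν (⇑(S ^ n i) '' B ∩ B)) atTop) :
    (∀ E : Set (X × Y), MeasurableSet E → 0 < (μ.prod ν) E → (μ.prod ν) E < ⊤ →
      α * β * (μ.prod ν) E ≤
        liminf (fun i => (μ.prod ν) (⇑((T.prodCongr S) ^ n i) '' E ∩ E)) atTop) ∧
    (∀ B : Set (X × Y), MeasurableSet B → 0 < (μ.prod ν) B →
      ∃ m : ℕ, 0 < m ∧ 0 < (μ.prod ν) (⇑((T.prodCongr S) ^ m) '' B ∩ B)) :=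
  product_partially_rigid_and_conservative_general μ ν T S hT' hS' α β hα hβ n hnpos hTrig hSrig
end

section
/- Let G = ℤ^d and let E = {(c_1 a_1, …, c_d a_d) : c_i ∈ {−1,0,1}} for fixed positive integers a_1, …, a_d. Suppose C ⊆ ℤ^d has adequate gaps w.r.t. a_1, …, a_d: for every n ∈ ℕ there exists ℓ_n ∈ ℕ with (ℓ_n·E ⊕ [−n,n]^d) ∩ C = ∅ where ℓ_n·E = {ℓ_n v : v ∈ E, v ≠ 0}. Assume also 0 ∈ C and C = −C. Then there exists a sequence of positive integers (h_m) with h_{m+1} ≥ 2 h_m such that, setting D_m = ⊕_{k=1}^{m} {(c_1 a_1 h_k, …, c_d a_d h_k) : c_i ∈ {−1,0,1}}, one has C ∩ D_m = {0} for all m. -/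
/-- `E a = {(c 1 * a 1, …, c d * a d) : c i ∈ {-1,0,1}}` in `ℤ^d`. -/
def cubeE {d : ℕ} (a : Fin d → ℤ) : Set (Fin d → ℤ) :=
  {v | ∃ c : Fin d → ℤ, (∀ i, c i ∈ ({-1, 0, 1} : Set ℤ)) ∧ v = fun i => c i * a i}

/-- `D a h m` is the iterated sumset
`⊕_{k=1}^{m} {(c 1 * a 1 * h k, …, c d * a d * h k) : c i ∈ {-1,0,1}}`. -/
def gridD {d : ℕ} (a : Fin d → ℤ) (h : ℕ → ℤ) (m : ℕ) : Set (Fin d → ℤ) :=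
  {v | ∃ c : ℕ → Fin d → ℤ, (∀ k i, c k i ∈ ({-1, 0, 1} : Set ℤ)) ∧
    v = fun i => ∑ k ∈ Finset.Icc 1 m, c k i * a i * h k}

/-!
Choose the heights greedily: `h (m+1)` is a gap parameter `ℓ_N` for an `N` exceeding
`max_i |a i| · (h 1 + ⋯ + h m)`. A point of `D_m` whose top nonzero level is `k` is then
`h k · v + w` with `0 ≠ v ∈ E` and `w` in the cube `[-N, N]^d`, hence lies outside `C`.
Doubling comes for free: `0 ∈ C` forces `ℓ_N · max_i a i > N`.
-/

open Finset

section Gaps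

variable {d : ℕ}

/-- `ℓ` is a gap parameter for `n`: `(ℓ • (E \ {0}) + [-n, n]^d) ∩ C = ∅`. -/
def GapAt (a : Fin d → ℤ) (C : Set (Fin d → ℤ)) (n ℓ : ℕ) : Prop :=
  ∀ v ∈ cubeE a, v ≠ 0 → ∀ w : Fin d → ℤ, (∀ i, |w i| ≤ (n : ℤ)) →
    (fun i => (ℓ : ℤ) * v i + w i) ∉ C

variable {a : Fin d → ℤ} {C : Set (Fin d → ℤ)} {n ℓ : ℕ}

theorem GapAt.mono {n' : ℕ} (h : GapAt a C n ℓ) (hn : n' ≤ n) : GapAt a C n' ℓ :=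
  fun v hv hv0 w hw => h v hv hv0 w fun i => (hw i).trans (by exact_mod_cast hn)

theorem single_mem_cubeE (a : Fin d → ℤ) (i : Fin d) : Pi.single i (a i) ∈ cubeE a := by
  refine ⟨Pi.single i 1, fun j => ?_, ?_⟩
  · by_cases hj : j = i <;> simp [hj]
  · ext j
    by_cases hj : j = i <;> simp [hj]

theorem GapAt.lt_mul (h : GapAt a C n ℓ) (hC : 0 ∈ C) {i : Fin d} {A : ℕ} (hai : 0 < a i)
    (hA : a i ≤ A) : n < ℓ * A := by
  by_contra! hle
  have hsmall : ∀ j, |-(ℓ : ℤ) * (Pi.single i (a i) : Fin d → ℤ) j| ≤ n := by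
    intro j
    by_cases hj : j = i
    · subst hj
      have : (ℓ : ℤ) * a j ≤ ℓ * A := mul_le_mul_of_nonneg_left hA (by positivity)
      simp only [Pi.single_eq_same, abs_mul, abs_neg, Nat.abs_cast, abs_of_pos hai]
      exact_mod_cast this.trans (by exact_mod_cast hle)
    · simp [hj]
  refine h _ (single_mem_cubeE a i) (by simpa using hai.ne') _ hsmall ?_
  convert hC using 1
  ext j
  simp

end Gaps

section Grid

variable {d : ℕ} {a : Fin d → ℤ} {C : Set (Fin d → ℤ)}

theorem abs_sum_coeff_mul_le {c : ℕ → ℤ} (hc : ∀ k, c k ∈ ({-1, 0, 1} : Set ℤ)) (x : ℤ)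
    (h : ℕ → ℕ) (s : Finset ℕ) :
    |∑ k ∈ s, c k * x * h k| ≤ |x| * ((∑ k ∈ s, h k : ℕ) : ℤ) := by
  push_cast
  rw [mul_sum]
  refine (abs_sum_le_sum_abs _ _).trans (sum_le_sum fun k _ => ?_)
  rw [abs_mul, abs_mul, Nat.abs_cast]
  have hck : |c k| ≤ 1 := by
    obtain h | h | h : c k = -1 ∨ c k = 0 ∨ c k = 1 := hc k <;> simp [h]
  have : |c k| * |x| ≤ |x| := mul_le_of_le_one_left (abs_nonneg x) hck
  exact mul_le_mul_of_nonneg_right this (by positivity)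

theorem zero_mem_gridD (a : Fin d → ℤ) (h : ℕ → ℤ) (m : ℕ) : (0 : Fin d → ℤ) ∈ gridD a h m :=
  ⟨fun _ _ => 0, fun _ _ => by simp, by ext; simp⟩

/-- Induction on `m`, peeling off the top level `m + 1` when its vector `c (m+1) · a` is
nonzero; the lower levels then form the perturbation in `[-N, N]^d`. -/
theorem eq_zero_of_mem_gridD {A : ℕ} (hA : ∀ i, |a i| ≤ A) (h : ℕ → ℕ)
    (hgap : ∀ m, GapAt a C (A * ∑ k ∈ Icc 1 m, h k) (h (m + 1))) (m : ℕ) :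
    ∀ x ∈ gridD a (fun k => h k) m, x ∈ C → x = 0 := by
  rintro _ ⟨c, hc, rfl⟩ hxC
  induction m with
  | zero => ext; simp
  | succ m ih =>
    have hsplit : ∀ i, ∑ k ∈ Icc 1 (m + 1), c k i * a i * h k
        = (h (m + 1) : ℤ) * (c (m + 1) i * a i) + ∑ k ∈ Icc 1 m, c k i * a i * h k := by
      intro i
      rw [sum_Icc_succ_top (by omega)]
      ring
    by_cases hv : (fun i => c (m + 1) i * a i) = 0
    · have hdrop : (fun i => ∑ k ∈ Icc 1 (m + 1), c k i * a i * h k)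
          = fun i => ∑ k ∈ Icc 1 m, c k i * a i * h k := by
        ext i
        rw [hsplit, congrFun hv i]
        simp
      rw [hdrop] at hxC ⊢
      exact ih hxC
    · refine absurd ?_ (hgap m _ ⟨c (m + 1), hc (m + 1), rfl⟩ hv
        (fun i => ∑ k ∈ Icc 1 m, c k i * a i * h k) fun i => ?_)
      · simpa only [hsplit] using hxC
      · calc |∑ k ∈ Icc 1 m, c k i * a i * h k|
            ≤ |a i| * ((∑ k ∈ Icc 1 m, h k : ℕ) : ℤ) :=
              abs_sum_coeff_mul_le (fun k => hc k i) _ _ _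
          _ ≤ A * ((∑ k ∈ Icc 1 m, h k : ℕ) : ℤ) :=
              mul_le_mul_of_nonneg_right (hA i) (by positivity)
          _ = ((A * ∑ k ∈ Icc 1 m, h k : ℕ) : ℤ) := by push_cast; rfl

theorem inter_gridD_eq_zero {A : ℕ} (hA : ∀ i, |a i| ≤ A) (h0 : (0 : Fin d → ℤ) ∈ C)
    (h : ℕ → ℕ) (hgap : ∀ m, GapAt a C (A * ∑ k ∈ Icc 1 m, h k) (h (m + 1))) (m : ℕ) :
    C ∩ gridD a (fun k => h k) m = {0} := by
  refine Set.Subset.antisymm (fun x ⟨hxC, hxD⟩ => eq_zero_of_mem_gridD hA h hgap m x hxD hxC) ?_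
  rintro _ rfl
  exact ⟨h0, zero_mem_gridD a _ m⟩

end Grid

section Heights

/-- `runningSum f m = 1 + heights f 1 + ⋯ + heights f m`. -/
def runningSum (f : ℕ → ℕ) : ℕ → ℕ
  | 0 => 1
  | m + 1 => runningSum f m + f (runningSum f m)

def heights (f : ℕ → ℕ) : ℕ → ℕ
  | 0 => 1
  | m + 1 => f (runningSum f m)

theorem sum_Icc_heights_lt_runningSum (f : ℕ → ℕ) (m : ℕ) :
    ∑ k ∈ Icc 1 m, heights f k < runningSum f m := by
  induction m with
  | zero => simp [runningSum]
  | succ m ih =>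
    rw [sum_Icc_succ_top (by omega)]
    change _ + f (runningSum f m) < runningSum f m + f (runningSum f m)
    omega

theorem heights_le_runningSum (f : ℕ → ℕ) (m : ℕ) : heights f m ≤ runningSum f m := by
  cases m <;> simp [heights, runningSum]

theorem heights_pos {f : ℕ → ℕ} (hf : ∀ S, 2 * S < f S) (m : ℕ) : 0 < heights f m := by
  cases m with
  | zero => simp [heights]
  | succ m => exact (Nat.zero_le _).trans_lt (hf _)

theorem two_mul_heights_lt_succ {f : ℕ → ℕ} (hf : ∀ S, 2 * S < f S) (m : ℕ) :
    2 * heights f m < heights f (m + 1) :=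
  (Nat.mul_le_mul_left 2 (heights_le_runningSum f m)).trans_lt (hf _)

end Heights

theorem exists_skyscraper_heights_avoiding_Zd_general
    {d : ℕ} (hd : 0 < d) (a : Fin d → ℤ) (hapos : ∀ i, 0 < a i)
    (C : Set (Fin d → ℤ)) (h0 : (0 : Fin d → ℤ) ∈ C)
    (hgaps : ∀ n : ℕ, ∃ ℓ : ℕ,
      ∀ v ∈ cubeE a, v ≠ 0 → ∀ w : Fin d → ℤ, (∀ i, |w i| ≤ (n : ℤ)) →
        (fun i => (ℓ : ℤ) * v i + w i) ∉ C) :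
    ∃ h : ℕ → ℤ, (∀ k, 0 < h k) ∧ (∀ k, 2 * h k ≤ h (k + 1)) ∧
      ∀ m : ℕ, C ∩ gridD a h m = {0} := by
  obtain ⟨A, hA⟩ : ∃ A : ℕ, ∀ i, |a i| ≤ A :=
    ⟨∑ i, (a i).natAbs, fun i => by
      rw [Int.abs_eq_natAbs]
      exact_mod_cast single_le_sum (fun j _ => Nat.zero_le (a j).natAbs) (mem_univ i)⟩
  choose ℓ hℓ using hgaps
  have hℓ : ∀ n, GapAt a C n (ℓ n) := hℓ
  let i₀ : Fin d := ⟨0, hd⟩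
  let f : ℕ → ℕ := fun S => ℓ (A * (2 * S))
  have hf : ∀ S, 2 * S < f S := fun S => Nat.lt_of_mul_lt_mul_left (a := A) <| by
    rw [mul_comm A (f S)]
    exact (hℓ _).lt_mul h0 (hapos i₀) ((le_abs_self _).trans (hA i₀))
  refine ⟨fun k => heights f k, fun k => Int.natCast_pos.mpr (heights_pos hf k),
    fun k => by dsimp only; exact_mod_cast (two_mul_heights_lt_succ hf k).le,
    inter_gridD_eq_zero hA h0 _ fun m => (hℓ _).mono ?_⟩
  have := sum_Icc_heights_lt_runningSum f m
  exact Nat.mul_le_mul_left A (by omega)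

theorem exists_skyscraper_heights_avoiding_Zd
    {d : ℕ} (hd : 0 < d) (a : Fin d → ℤ) (hapos : ∀ i, 0 < a i)
    (C : Set (Fin d → ℤ)) (h0 : (0 : Fin d → ℤ) ∈ C) (hsym : ∀ v ∈ C, -v ∈ C)
    (hgaps : ∀ n : ℕ, ∃ ℓ : ℕ,
      ∀ v ∈ cubeE a, v ≠ 0 → ∀ w : Fin d → ℤ, (∀ i, |w i| ≤ (n : ℤ)) →
        (fun i => (ℓ : ℤ) * v i + w i) ∉ C) :
    ∃ h : ℕ → ℤ, (∀ k, 0 < h k) ∧ (∀ k, 2 * h k ≤ h (k + 1)) ∧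
      ∀ m : ℕ, C ∩ gridD a h m = {0} :=
  exists_skyscraper_heights_avoiding_Zd_general hd a hapos C h0 hgaps
end
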